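/- Let n be a natural number with n ≥ 3 and n ≠ 6. For every group G that is isomorphic to the symmetric group S_n (i.e. there is a group isomorphism G ≃* Equiv.Perm (Fin n)), the automorphism group MulAut G is again isomorphic to S_n. Consequently the iterated automorphism groups stabilize: Aut^k(S_n) is isomorphic to S_n for every k. -/

import Mathlib

/-!
An automorphism of `Perm α` preserves orders and centralizer sizes. An involution of cycle type
`2^k` has a centralizer of order `(n - 2k)! 2^k k!`, which equals the order `2 (n - 2)!` of the
centralizer of a transposition only for `k = 1`, or for `k = 3` and `n = 6`. So for `n ≠ 6` every
automorphism `φ` maps transpositions to transpositions. The images of the pairwise non-commuting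
transpositions `(x₀ x)` are pairwise non-commuting transpositions, hence all move one common
point `a`, and `x ↦ φ (x₀ x) a` is a permutation `τ` with `φ = conj τ` on these generators. As the
center of `Perm α` is trivial for `n ≥ 3`, `conj : Perm α → MulAut (Perm α)` is an isomorphism.
-/

open CategoryTheory

/-- The `k`-fold iterated automorphism group, as a bundled group. -/
def iterAut (G : GrpCat) : ℕ → GrpCat
  | 0 => G
  | k + 1 => GrpCat.of (MulAut (iterAut G k))

open Nat in
theorem Nat.eq_six_of_factorial_mul_two_pow_mul_factorial_eq {n k : ℕ} (hk : 2 ≤ k)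
    (hkn : 2 * k ≤ n) (h : (n - 2 * k)! * 2 ^ k * k ! = (n - 2)! * 2) : n = 6 := by
  obtain ⟨j, rfl⟩ := Nat.exists_eq_add_of_le' hk
  obtain ⟨m, rfl⟩ := Nat.exists_eq_add_of_le' hkn
  have hasc : (m + 1).ascFactorial (j + 2 + j) = 2 ^ (j + 1) * (j + 2)! := by
    apply Nat.eq_of_mul_eq_mul_left (mul_pos (factorial_pos m) two_pos)
    rw [mul_right_comm, factorial_mul_ascFactorial,
      ← show m + 2 * (j + 2) - 2 = m + (j + 2 + j) by omega, ← h,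
      show m + 2 * (j + 2) - 2 * (j + 2) = m by omega]
    ring
  obtain rfl | rfl | hj : j = 0 ∨ j = 1 ∨ 2 ≤ j := by omega
  · rcases m with _ | m
    · simp [ascFactorial_succ, factorial] at hasc
    · have := ascFactorial_le 2 (show 2 ≤ m + 1 + 1 by omega)
      simp [ascFactorial_succ, factorial] at hasc this
      omega
  · rcases m with _ | m
    · rfl
    · have := ascFactorial_le 4 (show 2 ≤ m + 1 + 1 by omega)
      simp [ascFactorial_succ, factorial] at hasc this
      omega
  · exfalso
    have hbound : (j + 2)! * (m + j + 3) ^ j ≤ (m + 1).ascFactorial (j + 2 + j) := by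
      rw [← ascFactorial_mul_ascFactorial, ← one_ascFactorial]
      exact Nat.mul_le_mul (ascFactorial_le _ (by omega))
        ((pow_succ_le_ascFactorial _ _).trans_eq (by ring_nf))
    have h4 : 2 ^ (j + 1) < (m + j + 3) ^ j :=
      calc 2 ^ (j + 1) < 4 ^ j := by
            rw [show 4 = 2 ^ 2 by rfl, ← pow_mul]
            exact Nat.pow_lt_pow_right (by norm_num) (by omega)
        _ ≤ (m + j + 3) ^ j := Nat.pow_le_pow_left (by omega) _
    have := (Nat.mul_lt_mul_left (factorial_pos (j + 2))).mpr h4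
    rw [hasc] at hbound
    linarith

theorem MulEquiv.nat_card_centralizer_apply {G H : Type*} [Group G] [Group H] (e : G ≃* H)
    (g : G) : Nat.card (Subgroup.centralizer {e g}) = Nat.card (Subgroup.centralizer {g}) :=
  Nat.card_congr <| (e.toEquiv.subtypeEquiv fun x => by
    simp [Subgroup.mem_centralizer_singleton_iff, ← map_mul, e.injective.eq_iff]).symm

namespace Equiv.Perm
variable {α : Type*} [DecidableEq α]

theorem commute_swap_of_apply_eq {f : Perm α} {x y : α} (hx : f x = x) (hy : f y = y) :
    Commute f (swap x y) := by
  have := swap_apply_apply f x y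
  rw [hx, hy, eq_mul_inv_iff_mul_eq] at this
  exact this.symm

theorem IsSwap.eq_swap_of_apply_ne {σ : Perm α} (hσ : σ.IsSwap) {x y : α} (hxy : x ≠ y)
    (hx : σ x ≠ x) (hy : σ y ≠ y) : σ = swap x y := by
  obtain ⟨a, b, hab, rfl⟩ := hσ
  have mem : ∀ {z}, swap a b z ≠ z → z = a ∨ z = b := fun hz => by
    by_contra! h; exact hz (swap_apply_of_ne_of_ne h.1 h.2)
  rcases mem hx with rfl | rfl <;> rcases mem hy with rfl | rfl
  all_goals first | exact absurd rfl hxy | rfl | exact swap_comm _ _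

theorem IsSwap.eq_swap_apply {σ : Perm α} (hσ : σ.IsSwap) {x : α} (hx : σ x ≠ x) :
    σ = swap x (σ x) :=
  hσ.eq_swap_of_apply_ne hx.symm hx (σ.injective.ne hx)

theorem IsSwap.exists_eq_swap_of_not_commute {σ τ : Perm α} (hσ : σ.IsSwap) (hτ : τ.IsSwap)
    (h : ¬Commute σ τ) : ∃ a b c, a ≠ b ∧ a ≠ c ∧ b ≠ c ∧ σ = swap a b ∧ τ = swap a c := by
  obtain ⟨a, b, hab, rfl⟩ := hσ
  have key : ∀ {a b}, a ≠ b → ¬Commute (swap a b) τ → τ a ≠ a →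
      ∃ a' b' c, a' ≠ b' ∧ a' ≠ c ∧ b' ≠ c ∧ swap a b = swap a' b' ∧ τ = swap a' c := by
    intro a b hab h ha
    refine ⟨a, b, τ a, hab, ha.symm, fun hb => h ?_, rfl, hτ.eq_swap_apply ha⟩
    rw [hτ.eq_swap_apply ha, ← hb]
  by_cases ha : τ a = a
  · have hb : τ b ≠ b := fun hb => h (commute_swap_of_apply_eq ha hb).symm
    rw [swap_comm] at h ⊢
    exact key hab.symm h hb
  · exact key hab h ha

theorem monoidHom_ext_of_swap [Finite α] {G : Type*} [Group G] {f g : Perm α →* G} (x₀ : α)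
    (h : ∀ x, f (swap x₀ x) = g (swap x₀ x)) : f = g := by
  refine MonoidHom.eq_of_eqOn_dense closure_isSwap ?_
  rintro _ ⟨x, y, -, rfl⟩
  have hconj : swap x y = swap x₀ x * swap x₀ (swap x₀ x y) * (swap x₀ x)⁻¹ := by
    rw [← swap_apply_apply, swap_apply_left, swap_apply_self]
  simp only [hconj, map_mul, map_inv, h]

theorem not_commute_swap_swap {x y z : α} (hxy : x ≠ y) (hxz : x ≠ z) (hyz : y ≠ z) :
    ¬Commute (swap x y) (swap x z) := fun h => by
  have := congr($h.eq x)
  rw [Perm.mul_apply, Perm.mul_apply, swap_apply_left, swap_apply_left,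
    swap_apply_of_ne_of_ne hxz.symm hyz.symm, swap_apply_of_ne_of_ne hxy.symm hyz] at this
  exact hyz this.symm

theorem exists_forall_mulAut_swap_apply_ne {φ : MulAut (Perm α)}
    (hφ : ∀ σ : Perm α, σ.IsSwap → (φ σ).IsSwap) {x₀ x₁ x₂ : α} (h₀₁ : x₀ ≠ x₁) (h₀₂ : x₀ ≠ x₂)
    (h₁₂ : x₁ ≠ x₂) : ∃ a, ∀ x, x ≠ x₀ → φ (swap x₀ x) a ≠ a := by
  have hswap : ∀ {x}, x ≠ x₀ → (φ (swap x₀ x)).IsSwap := fun hx => hφ _ ⟨_, _, hx.symm, rfl⟩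
  have hnc : ∀ {x y}, x ≠ x₀ → y ≠ x₀ → x ≠ y → ¬Commute (φ (swap x₀ x)) (φ (swap x₀ y)) :=
    fun hx hy hxy => (commute_map_iff φ.injective).not.mpr
      (not_commute_swap_swap hx.symm hy.symm hxy)
  obtain ⟨a, b₁, b₂, hab₁, hab₂, hb₁₂, h₁, h₂⟩ := (hswap h₀₁.symm).exists_eq_swap_of_not_commute
    (hswap h₀₂.symm) (hnc h₀₁.symm h₀₂.symm h₁₂)
  -- A transposition fixing `a` but commuting with neither `(a b₁)` nor `(a b₂)` is
  -- `(b₁ b₂) = φ (x₁ x₂)`.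
  refine ⟨a, fun x hx hfix => ?_⟩
  have hx₁ : x ≠ x₁ := by rintro rfl; simp [h₁, hab₁.symm] at hfix
  have hx₂ : x ≠ x₂ := by rintro rfl; simp [h₂, hab₂.symm] at hfix
  have moves : ∀ {y b}, y ≠ x₀ → y ≠ x → φ (swap x₀ y) = swap a b → φ (swap x₀ x) b ≠ b :=
    fun hy hyx hyb hb => hnc hx hy hyx.symm (hyb ▸ commute_swap_of_apply_eq hfix hb)
  have hx_eq : φ (swap x₀ x) = φ (swap x₁ x₂) := by
    rw [(hswap hx).eq_swap_of_apply_ne hb₁₂ (moves h₀₁.symm hx₁.symm h₁)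
        (moves h₀₂.symm hx₂.symm h₂),
      ← swap_mul_swap_mul_swap h₀₂.symm h₁₂.symm, swap_comm x₂, map_mul, map_mul, h₁, h₂,
      swap_comm a b₂, swap_mul_swap_mul_swap hab₂.symm hb₁₂.symm]
  have := congr($(φ.injective hx_eq) x₀)
  rw [swap_apply_left, swap_apply_of_ne_of_ne h₀₁ h₀₂] at this
  exact hx this

variable [Fintype α]

open Nat in
theorem nat_card_centralizer_of_cycleType_eq_replicate_two {σ : Perm α} {k : ℕ}
    (h : σ.cycleType = Multiset.replicate k 2) :
    Nat.card (Subgroup.centralizer {σ}) = (Fintype.card α - 2 * k)! * 2 ^ k * k ! := by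
  rw [nat_card_centralizer, h]
  rcases k with _ | k
  · simp
  · rw [Multiset.toFinset_replicate, if_neg k.succ_ne_zero]
    simp only [Multiset.sum_replicate, Multiset.prod_replicate, Finset.prod_singleton,
      Multiset.count_replicate_self, smul_eq_mul]
    rw [mul_comm (k + 1) 2]

theorem IsSwap.mulAut_apply (h6 : Fintype.card α ≠ 6) (φ : MulAut (Perm α)) {σ : Perm α}
    (hσ : σ.IsSwap) : (φ σ).IsSwap := by
  have hsq : φ σ ^ 2 = 1 := by rw [← map_pow, ← hσ.orderOf, pow_orderOf_eq_one, map_one]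
  set k := (φ σ).cycleType.card
  have hcycleType : (φ σ).cycleType = Multiset.replicate k 2 := cycleType_of_pow_prime_eq_one hsq
  have hk0 : k ≠ 0 := by
    rw [Ne, card_cycleType_eq_zero, map_eq_one_iff _ φ.injective]
    exact hσ.isCycle.ne_one
  rcases eq_or_ne k 1 with hk1 | hk1
  · rw [isSwap_iff_cycleType, hcycleType, hk1, Multiset.replicate_one]
  have hkn : 2 * k ≤ Fintype.card α := by
    simpa [← sum_cycleType, hcycleType, mul_comm] using (φ σ).support.card_le_univ
  have hcard := φ.nat_card_centralizer_apply σ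
  rw [nat_card_centralizer_of_cycleType_eq_replicate_two hcycleType,
    nat_card_centralizer_of_cycleType_eq_replicate_two (k := 1)
      (isSwap_iff_cycleType.mp hσ)] at hcard
  exact absurd (Nat.eq_six_of_factorial_mul_two_pow_mul_factorial_eq (by omega) hkn
    (by simpa using hcard)) h6

theorem mulAut_conj_injective (hα : 3 ≤ Fintype.card α) :
    Function.Injective (MulAut.conj : Perm α →* MulAut (Perm α)) := by
  refine (injective_iff_map_eq_one _).mpr fun σ hσ => Equiv.ext fun x => ?_
  rw [one_apply]
  by_contra hx
  obtain ⟨y, -, hy⟩ := Finset.exists_mem_notMem_of_card_lt_card (s := {x, σ x})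
    (t := Finset.univ) (Finset.card_le_two.trans_lt (by rw [Finset.card_univ]; omega))
  simp only [Finset.mem_insert, Finset.mem_singleton, not_or] at hy
  have hswap : swap (σ x) (σ y) = swap x y := by
    rw [swap_apply_apply, ← MulAut.conj_apply, hσ, MulAut.one_apply]
  have := congr($hswap (σ x))
  rw [swap_apply_left, swap_apply_of_ne_of_ne hx (Ne.symm hy.2)] at this
  exact hy.1 (σ.injective this)

theorem exists_mulAut_conj_eq_of_isSwap (hα : 3 ≤ Fintype.card α) {φ : MulAut (Perm α)}
    (hφ : ∀ σ : Perm α, σ.IsSwap → (φ σ).IsSwap) : ∃ τ, MulAut.conj τ = φ := by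
  obtain ⟨x₀, x₁, x₂, h₀₁, h₀₂, h₁₂⟩ := Fintype.two_lt_card_iff.mp hα
  obtain ⟨a, ha⟩ := exists_forall_mulAut_swap_apply_ne hφ h₀₁ h₀₂ h₁₂
  set f : α → α := fun x => φ (swap x₀ x) a
  have hf : ∀ x, φ (swap x₀ x) = swap a (f x) := by
    intro x
    rcases eq_or_ne x x₀ with rfl | hx
    · simp only [f, swap_self, ← one_def, map_one, one_apply]
    · exact (hφ _ ⟨_, _, hx.symm, rfl⟩).eq_swap_apply (ha x hx)
  have hinj : Function.Injective f := fun x y hxy => by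
    have : swap x₀ x = swap x₀ y := φ.injective (by rw [hf, hf, hxy])
    simpa using congr($this x₀)
  let τ := Equiv.ofBijective f hinj.bijective_of_finite
  refine ⟨τ, MulEquiv.toMonoidHom_injective (monoidHom_ext_of_swap x₀ fun x => ?_)⟩
  have hτ₀ : τ x₀ = a := by
    simp only [τ, f, ofBijective_apply, swap_self, ← one_def, map_one, one_apply]
  change τ * swap x₀ x * τ⁻¹ = φ (swap x₀ x)
  rw [← swap_apply_apply, hf, hτ₀]
  rfl

noncomputable def mulAutEquiv (h3 : 3 ≤ Fintype.card α) (h6 : Fintype.card α ≠ 6) :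
    MulAut (Perm α) ≃* Perm α :=
  (MulEquiv.ofBijective MulAut.conj ⟨mulAut_conj_injective h3, fun φ =>
    exists_mulAut_conj_eq_of_isSwap h3 fun _ => IsSwap.mulAut_apply h6 φ⟩).symm

end Equiv.Perm

theorem symm_group_aut_stabilizes (n : ℕ) (hn : 3 ≤ n) (hn6 : n ≠ 6) :
    (∀ (G : Type) [Group G], Nonempty (G ≃* Equiv.Perm (Fin n)) →
      Nonempty (MulAut G ≃* Equiv.Perm (Fin n))) ∧
    (∀ k : ℕ, Nonempty ((iterAut (GrpCat.of (Equiv.Perm (Fin n))) k) ≃* Equiv.Perm (Fin n))) := by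
  have autEquiv : MulAut (Equiv.Perm (Fin n)) ≃* Equiv.Perm (Fin n) :=
    Equiv.Perm.mulAutEquiv (by rwa [Fintype.card_fin]) (by rwa [Fintype.card_fin])
  have aut_of_equiv : ∀ (G : Type) [Group G], Nonempty (G ≃* Equiv.Perm (Fin n)) →
      Nonempty (MulAut G ≃* Equiv.Perm (Fin n)) :=
    fun _ _ ⟨e⟩ => ⟨(MulAut.congr e).trans autEquiv⟩
  refine ⟨aut_of_equiv, fun k => ?_⟩
  induction k with
  | zero => exact ⟨MulEquiv.refl _⟩
  | succ k ih => exact aut_of_equiv _ ih
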